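/- The function u(x + iy) = cos x · cosh y − 1 is harmonic on all of ℂ, is a ridge function (u(z) ≤ u(i·Im z) for all z), and is normalized: u(0) = 0, u_x(0) = 0, u_y(0) = 0, u_{yy}(0) = 1; moreover liminf_{r→∞} (log max{u(ir), u(−ir)})/r = 1 ≠ 0, and the conclusion of Theorem 1 fails for u: there is no absolute constant c0 such that |u(z) + Re(z²/2)| ≤ c0·|z|³/Δ for all |z| ≤ Δ/3 and all Δ > 0 (for instance, for fixed z = iy with y ≠ 0 the left-hand side equals cosh y − 1 − y²/2 > 0 while the right-hand side tends to 0 as Δ → ∞). Hence the growth condition liminf_{r→∞} (log max{u(ir), u(−ir)})/r = 0 in Theorem 1 cannot be dropped and is best possible. -/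

import Mathlib

open Complex Filter Metric MeasureTheory Bornology ComplexConjugate

noncomputable section

/-- The average of `u` over the circle of radius `r` centered at `z`. -/
def circAvg (u : ℂ → ℝ) (z : ℂ) (r : ℝ) : ℝ :=
  (2 * Real.pi)⁻¹ * ∫ θ in (0:ℝ)..(2 * Real.pi), u (z + r * Complex.exp (θ * Complex.I))

/-- `u` is harmonic on `s`: continuous on `s` with the local mean value property. -/
def IsHarmonicOn (u : ℂ → ℝ) (s : Set ℂ) : Prop :=
  ContinuousOn u s ∧ ∀ z ∈ s, ∀ᶠ r in nhdsWithin (0:ℝ) (Set.Ioi 0), u z = circAvg u z r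

/-- `u` is subharmonic on `s`: upper semicontinuous on `s`, and on every closed disc
contained in `s` it is dominated by any harmonic comparison function dominating it on the
boundary circle. -/
def IsSubharmonicOn (u : ℂ → ℝ) (s : Set ℂ) : Prop :=
  UpperSemicontinuousOn u s ∧
  ∀ (z : ℂ) (r : ℝ), 0 < r → closedBall z r ⊆ s →
    ∀ h : ℂ → ℝ, ContinuousOn h (closedBall z r) → IsHarmonicOn h (ball z r) →
      (∀ w ∈ sphere z r, u w ≤ h w) → ∀ w ∈ closedBall z r, u w ≤ h w

/-- `u` is a ridge function: `u z ≤ u (i · Im z)` for all `z`. -/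
def IsRidge (u : ℂ → ℝ) : Prop := ∀ z : ℂ, u z ≤ u (z.im * Complex.I)

/-- The growth condition `liminf_{r → ∞} log (max (u (i r)) (u (-i r))) / r = 0`. -/
def RidgeGrowth (u : ℂ → ℝ) : Prop :=
  Filter.liminf
    (fun r : ℝ => Real.log (max (u (r * Complex.I)) (u (-(r * Complex.I)))) / r)
    Filter.atTop = 0

/-- The open vertical strip `S(Δ) = {z : |Re z| < Δ}`. -/
def strip (Δ : ℝ) : Set ℂ := {z : ℂ | |z.re| < Δ}

/-- The example `u(x + iy) = cos x · cosh y - 1` showing sharpness of the growth condition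
in Theorem 1. -/
def exampleU : ℂ → ℝ := fun z => Real.cos z.re * Real.cosh z.im - 1

private lemma exampleU_eq (z : ℂ) : exampleU z = (Complex.cos z).re - 1 := by
  rw [show Complex.cos z = Complex.cos (z.re + z.im * Complex.I) by rw [re_add_im],
    Complex.cos_add_mul_I]
  simp [exampleU, ← Complex.ofReal_cos, ← Complex.ofReal_sin, ← Complex.ofReal_cosh,
    ← Complex.ofReal_sinh]

private lemma cos_circle_integral (c : ℂ) {r : ℝ} (hr : 0 < r) :
    (∫ θ in (0:ℝ)..(2 * Real.pi), Complex.cos (c + r * Complex.exp (θ * Complex.I)))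
      = (2 * Real.pi) * Complex.cos c := by
  have hd : DiffContOnCl ℂ Complex.cos (ball c r) :=
    Complex.differentiable_cos.diffContOnCl
  have h := hd.circleIntegral_sub_inv_smul (mem_ball_self hr)
  rw [circleIntegral] at h
  simp only [deriv_circleMap, circleMap_sub_center, smul_eq_mul] at h
  have key : ∀ θ : ℝ, circleMap 0 r θ * Complex.I *
      ((circleMap 0 r θ)⁻¹ * Complex.cos (circleMap c r θ))
      = Complex.I * Complex.cos (circleMap c r θ) := by
    intro θ
    have hne : circleMap 0 r θ ≠ 0 := circleMap_ne_center hr.ne'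
    field_simp
  simp only [key] at h
  rw [intervalIntegral.integral_const_mul] at h
  have h2 : Complex.I * (∫ θ in (0:ℝ)..(2*Real.pi), Complex.cos (circleMap c r θ))
      = Complex.I * (((2*Real.pi : ℝ) : ℂ) * Complex.cos c) := by
    rw [h]; push_cast; ring
  have := mul_left_cancel₀ Complex.I_ne_zero h2
  simpa [circleMap] using this

private lemma exampleU_circAvg (z : ℂ) {r : ℝ} (hr : 0 < r) :
    exampleU z = circAvg exampleU z r := by
  have hcont : Continuous fun θ : ℝ => Complex.cos (z + r * Complex.exp (θ * Complex.I)) := by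
    fun_prop
  have hint : IntervalIntegrable
      (fun θ : ℝ => Complex.cos (z + r * Complex.exp (θ * Complex.I)))
      MeasureTheory.volume 0 (2 * Real.pi) := hcont.intervalIntegrable _ _
  have hre : (∫ θ in (0:ℝ)..(2 * Real.pi),
        (Complex.cos (z + r * Complex.exp (θ * Complex.I))).re)
      = ((∫ θ in (0:ℝ)..(2 * Real.pi),
        Complex.cos (z + r * Complex.exp (θ * Complex.I)))).re := by
    simpa using Complex.reCLM.intervalIntegral_comp_comm hint
  have h1 : (∫ θ in (0:ℝ)..(2 * Real.pi), exampleU (z + r * Complex.exp (θ * Complex.I)))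
      = (2 * Real.pi) * exampleU z := by
    have : (fun θ : ℝ => exampleU (z + r * Complex.exp (θ * Complex.I)))
        = fun θ : ℝ => (Complex.cos (z + r * Complex.exp (θ * Complex.I))).re - 1 :=
      funext fun θ => exampleU_eq _
    rw [this, intervalIntegral.integral_sub ((by fun_prop : Continuous fun θ : ℝ =>
        (Complex.cos (z + r * Complex.exp (θ * Complex.I))).re).intervalIntegrable _ _)
        ((continuous_const (y := (1:ℝ))).intervalIntegrable _ _),
      hre, cos_circle_integral z hr]
    simp [exampleU_eq, Complex.mul_re]
    ring
  rw [circAvg, h1]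
  have hπ : (2 * Real.pi) ≠ 0 := by positivity
  field_simp

private lemma hasFDerivU (z : ℂ) :
    HasFDerivAt exampleU
      (Real.cos z.re • (Real.sinh z.im • Complex.imCLM)
        + Real.cosh z.im • ((-Real.sin z.re) • Complex.reCLM)) z := by
  have h1 : HasFDerivAt (fun w : ℂ => Real.cos w.re)
      ((-Real.sin z.re) • Complex.reCLM) z :=
    (Real.hasDerivAt_cos z.re).comp_hasFDerivAt z Complex.reCLM.hasFDerivAt
  have h2 : HasFDerivAt (fun w : ℂ => Real.cosh w.im)
      ((Real.sinh z.im) • Complex.imCLM) z :=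
    (Real.hasDerivAt_cosh z.im).comp_hasFDerivAt z Complex.imCLM.hasFDerivAt
  exact (h1.mul h2).sub_const 1

private lemma fderivU_I (z : ℂ) :
    fderiv ℝ exampleU z Complex.I = Real.cos z.re * Real.sinh z.im := by
  rw [(hasFDerivU z).fderiv]
  simp

private lemma sndDeriv :
    fderiv ℝ (fun z => fderiv ℝ exampleU z Complex.I) 0 Complex.I = 1 := by
  have hg : (fun z => fderiv ℝ exampleU z Complex.I)
      = fun z : ℂ => Real.cos z.re * Real.sinh z.im := funext fun z => fderivU_I z
  rw [hg]
  have h1 : HasFDerivAt (fun w : ℂ => Real.cos w.re)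
      ((-Real.sin (0:ℝ)) • Complex.reCLM) 0 :=
    (Real.hasDerivAt_cos (Complex.re 0)).comp_hasFDerivAt 0 Complex.reCLM.hasFDerivAt
  have h2 : HasFDerivAt (fun w : ℂ => Real.sinh w.im)
      ((Real.cosh (0:ℝ)) • Complex.imCLM) 0 :=
    (Real.hasDerivAt_sinh (Complex.im 0)).comp_hasFDerivAt 0 Complex.imCLM.hasFDerivAt
  rw [show (fun z : ℂ => Real.cos z.re * Real.sinh z.im) = (fun w : ℂ => Real.cos w.re) * (fun w : ℂ => Real.sinh w.im) from rfl, (h1.mul h2).fderiv]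
  simp

private lemma fstDerivs : fderiv ℝ exampleU 0 1 = 0 ∧ fderiv ℝ exampleU 0 Complex.I = 0 := by
  rw [(hasFDerivU 0).fderiv]
  constructor <;> simp

private lemma tendsto_log_cosh :
    Tendsto (fun r : ℝ => Real.log (Real.cosh r - 1) / r) atTop (nhds 1) := by
  have key : ∀ᶠ r in atTop, Real.log (Real.cosh r - 1) / r
      = 1 + (2 * Real.log (1 - Real.exp (-r)) - Real.log 2) / r := by
    filter_upwards [eventually_gt_atTop 0] with r hr
    have he : Real.exp (-r) < 1 := by
      rw [Real.exp_lt_one_iff]; linarith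
    have h1 : (0:ℝ) < 1 - Real.exp (-r) := by linarith
    have hc : Real.cosh r - 1 = Real.exp r * (1 - Real.exp (-r))^2 / 2 := by
      rw [Real.cosh_eq, Real.exp_neg]
      have := Real.exp_ne_zero r
      field_simp
      ring
    rw [hc, Real.log_div (by positivity) two_ne_zero, Real.log_mul (Real.exp_ne_zero r)
      (by positivity), Real.log_exp, Real.log_pow]
    field_simp
    ring
  have h2 : Tendsto (fun r : ℝ => 1 + (2 * Real.log (1 - Real.exp (-r)) - Real.log 2) / r)
      atTop (nhds 1) := by
    have hexp : Tendsto (fun r : ℝ => Real.exp (-r)) atTop (nhds 0) :=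
      Real.tendsto_exp_atBot.comp tendsto_neg_atTop_atBot
    have hlog : Tendsto (fun r : ℝ => Real.log (1 - Real.exp (-r))) atTop (nhds 0) := by
      have h3 : Tendsto (fun r : ℝ => 1 - Real.exp (-r)) atTop (nhds 1) := by
        simpa using (tendsto_const_nhds (x := (1:ℝ))).sub hexp
      simpa [Function.comp_def] using (Real.continuousAt_log one_ne_zero).tendsto.comp h3
    have h4 : Tendsto (fun r : ℝ => (2 * Real.log (1 - Real.exp (-r)) - Real.log 2) / r)
        atTop (nhds 0) :=
      Tendsto.div_atTop (by simpa using ((hlog.const_mul 2).sub tendsto_const_nhds)) tendsto_id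
    simpa using (tendsto_const_nhds (x := (1:ℝ))).add h4
  exact h2.congr' (key.mono fun r h => h.symm)

private lemma liminf_one :
    Filter.liminf
      (fun r : ℝ =>
        Real.log (max (exampleU (r * Complex.I)) (exampleU (-(r * Complex.I)))) / r)
      Filter.atTop = 1 := by
  have hfun : (fun r : ℝ =>
      Real.log (max (exampleU (r * Complex.I)) (exampleU (-(r * Complex.I)))) / r)
      = fun r : ℝ => Real.log (Real.cosh r - 1) / r := by
    funext r
    simp [exampleU, Real.cosh_neg]
  rw [hfun]
  exact tendsto_log_cosh.liminf_eq

private lemma cosh_lower {y : ℝ} (hy : y ≠ 0) : 0 < Real.cosh y - 1 - y ^ 2 / 2 := by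
  have h1 : Real.cosh y = 1 + 2 * Real.sinh (y / 2) ^ 2 := by
    have := Real.cosh_two_mul (y / 2)
    have h2 := Real.cosh_sq' (y / 2)
    rw [show 2 * (y/2) = y by ring] at this
    linarith
  have ht : |y / 2| < Real.sinh |y / 2| := by
    rw [Real.self_lt_sinh_iff]
    positivity
  have h3 : (y / 2) ^ 2 < Real.sinh (y / 2) ^ 2 := by
    rw [← _root_.sq_abs (y / 2), ← _root_.sq_abs (Real.sinh (y / 2)), Real.abs_sinh]
    exact pow_lt_pow_left₀ ht (abs_nonneg _) two_ne_zero
  nlinarith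

/-- The function `u(x+iy) = cos x · cosh y - 1` is harmonic on `ℂ`, is a ridge function,
is normalized (`u(0) = u_x(0) = u_y(0) = 0`, `u_yy(0) = 1`), has
`liminf_{r→∞} log (max (u(ir)) (u(-ir))) / r = 1 ≠ 0`, and the conclusion of Theorem 1 fails
for it (for fixed `z = iy`, `y ≠ 0`, the left-hand side is `cosh y - 1 - y²/2 > 0` while the
right-hand side tends to `0` as `Δ → ∞`): the growth condition of Theorem 1 is best
possible. -/
theorem stmt11 :
    IsHarmonicOn exampleU Set.univ ∧
    IsRidge exampleU ∧
    exampleU 0 = 0 ∧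
    fderiv ℝ exampleU 0 1 = 0 ∧
    fderiv ℝ exampleU 0 Complex.I = 0 ∧
    fderiv ℝ (fun z => fderiv ℝ exampleU z Complex.I) 0 Complex.I = 1 ∧
    Filter.liminf
      (fun r : ℝ =>
        Real.log (max (exampleU (r * Complex.I)) (exampleU (-(r * Complex.I)))) / r)
      Filter.atTop = 1 ∧
    (1 : ℝ) ≠ 0 ∧
    (∀ y : ℝ, y ≠ 0 →
      exampleU ((y : ℂ) * Complex.I) + ((((y : ℂ) * Complex.I) ^ 2 / 2)).re =
        Real.cosh y - 1 - y ^ 2 / 2 ∧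
      0 < Real.cosh y - 1 - y ^ 2 / 2) ∧
    ¬ ∃ c0 : ℝ, ∀ Δ : ℝ, 0 < Δ → ∀ z : ℂ, ‖z‖ ≤ Δ / 3 →
        |exampleU z + (z ^ 2 / 2).re| ≤ c0 * ‖z‖ ^ 3 / Δ := by
  refine ⟨?_, ?_, ?_, fstDerivs.1, fstDerivs.2, sndDeriv, liminf_one, one_ne_zero, ?_, ?_⟩
  · refine ⟨(Continuous.continuousOn (by unfold exampleU; fun_prop)), fun z _ => ?_⟩
    filter_upwards [self_mem_nhdsWithin] with r hr
    exact exampleU_circAvg z hr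
  · intro z
    unfold exampleU
    simp only [Complex.mul_re, Complex.ofReal_re, Complex.I_re, Complex.ofReal_im,
      Complex.I_im, Complex.mul_im, mul_zero, mul_one, zero_mul, sub_zero, zero_sub, add_zero,
      zero_add, Real.cos_zero, one_mul]
    have h1 : Real.cos z.re ≤ 1 := Real.cos_le_one _
    have h2 : 0 < Real.cosh z.im := Real.cosh_pos _
    nlinarith
  · simp [exampleU]
  · intro y hy
    have key : (((y:ℂ) * Complex.I) ^ 2 / 2) = ((-(y^2)/2 : ℝ) : ℂ) := by
      rw [mul_pow, Complex.I_sq]; push_cast; ring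
    refine ⟨?_, cosh_lower hy⟩
    rw [key, Complex.ofReal_re]
    simp [exampleU]
    ring
  · rintro ⟨c0, h⟩
    have hε : 0 < Real.cosh 1 - 1 - 1 ^ 2 / 2 := cosh_lower one_ne_zero
    set ε := Real.cosh 1 - 1 - 1 ^ 2 / 2 with hεdef
    set Δ := max 3 (|c0| / ε + 1) with hΔdef
    have hΔ3 : (3:ℝ) ≤ Δ := le_max_left _ _
    have hΔpos : (0:ℝ) < Δ := lt_of_lt_of_le (by norm_num) hΔ3
    have hz : ‖(Complex.I)‖ ≤ Δ / 3 := by rw [Complex.norm_I]; linarith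
    have h2 := h Δ hΔpos Complex.I hz
    have hval : exampleU Complex.I + ((Complex.I) ^ 2 / 2).re = ε := by
      have key : ((Complex.I) ^ 2 / 2) = ((-(1:ℝ)/2 : ℝ) : ℂ) := by
        rw [Complex.I_sq]; push_cast; ring
      rw [key, Complex.ofReal_re]
      simp [exampleU, hεdef]
      ring
    rw [hval, abs_of_pos hε, Complex.norm_I] at h2
    have h3 : ε ≤ |c0| / Δ := by
      refine le_trans h2 ?_
      have : c0 * 1 ^ 3 = c0 := by ring
      rw [this]
      gcongr
      exact le_abs_self c0
    have h4 : |c0| / Δ < ε := by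
      rw [div_lt_iff₀ hΔpos]
      have hΔ2 : |c0| / ε + 1 ≤ Δ := le_max_right _ _
      have hkey : ε * (|c0| / ε + 1) = |c0| + ε := by field_simp
      have := mul_le_mul_of_nonneg_left hΔ2 hε.le
      rw [hkey] at this
      linarith [mul_comm ε Δ ▸ this]
    linarith
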